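/- For every real c ≥ 0 there exists a constant C > 0 such that for every integer n ≥ 1 and every y ∈ ℝ: |Γ(n/2 + c + iy)| ≥ C·e^{-π|y|/2}·exp( ((n-1)/2)·log(n/2) − n/2 ), where Γ is the complex Gamma function. -/

import Mathlib

/-!
For fixed `y`, the ratio `‖Γ(x + iy)‖ / Γ(x)` is nondecreasing in `x > 0`: by Euler's limit
formula it is the limit of `∏ⱼ (x + j) / ‖x + j + iy‖`, whose factors increase with `x`.
At `x = 1/2` the reflection formula gives `‖Γ(1/2 + iy)‖² = π / cosh(πy) ≥ π e^{-π|y|}`, hence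
`‖Γ(x + iy)‖ ≥ Γ(x) e^{-π|y|/2}` for `x ≥ 1/2`.

It remains to bound `Γ(n/2 + c)` from below. Legendre's duplication formula combined with
`Γ(s + 1/2) ≤ √s Γ(s)` (log-convexity) gives `Γ(n)·2^{1-n}·√π ≤ √(n/2)·Γ(n/2)²`, and Stirling's
lower bound for `(n-1)!` turns this into `Γ(n/2) ≥ exp(((n-1)/2) log(n/2) - n/2)`. For `n ≥ 4`,
`Γ` is increasing on `[2, ∞)`, so `Γ(n/2 + c) ≥ Γ(n/2)`; for `n ≤ 3` the exponential is at most
`1`, and `Γ(n/2 + c)` is at least the minimum of `Γ` on `(0, ∞)`.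
-/

open scoped Real Topology
open Filter

lemma Real.cosh_le_exp_abs (t : ℝ) : Real.cosh t ≤ Real.exp |t| := by
  rw [← Real.cosh_abs, Real.cosh_eq]
  linarith [Real.exp_le_exp.mpr (neg_le_self (abs_nonneg t))]

namespace Complex

lemma div_norm_ofReal_add_mul_I_le_of_le {s t : ℝ} (y : ℝ) (hs : 0 < s) (hst : s ≤ t) :
    s / ‖(s : ℂ) + y * I‖ ≤ t / ‖(t : ℂ) + y * I‖ := by
  have ht : 0 < t := hs.trans_le hst
  rw [norm_add_mul_I, norm_add_mul_I, div_le_div_iff₀ (by positivity) (by positivity)]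
  refine (pow_le_pow_iff_left₀ (by positivity) (by positivity) two_ne_zero).mp ?_
  rw [mul_pow, mul_pow, Real.sq_sqrt (by positivity), Real.sq_sqrt (by positivity)]
  nlinarith [mul_le_mul_of_nonneg_right (pow_le_pow_left₀ hs.le hst 2) (sq_nonneg y)]

lemma norm_GammaSeq_div_GammaSeq {x : ℝ} (hx : 0 < x) (y : ℝ) {n : ℕ} (hn : n ≠ 0) :
    ‖GammaSeq (x + y * I) n‖ / Real.GammaSeq x n =
      ∏ j ∈ Finset.range (n + 1), (x + j) / ‖((x + j : ℝ) : ℂ) + y * I‖ := by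
  rw [GammaSeq, Real.GammaSeq, norm_div, norm_mul, norm_natCast_cpow_of_pos (Nat.pos_of_ne_zero hn),
    norm_prod, Finset.prod_div_distrib]
  simp only [add_re, ofReal_re, mul_re, I_re, mul_zero, ofReal_im, I_im, mul_one, sub_self,
    add_zero, Complex.norm_natCast, ofReal_add, ofReal_natCast]
  have hcomm : ∀ j ∈ Finset.range (n + 1), ‖(x : ℂ) + y * I + j‖ = ‖(x : ℂ) + j + y * I‖ :=
    fun j _ => by ring_nf
  rw [Finset.prod_congr rfl hcomm]
  have : 0 < ∏ j ∈ Finset.range (n + 1), (x + j) := Finset.prod_pos fun j _ => by positivity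
  have : 0 < ∏ j ∈ Finset.range (n + 1), ‖(x : ℂ) + j + y * I‖ := Finset.prod_pos fun j _ => by
    rw [← ofReal_natCast, ← ofReal_add, norm_add_mul_I]; positivity
  field_simp

theorem monotoneOn_norm_Gamma_div_Gamma (y : ℝ) :
    MonotoneOn (fun x : ℝ => ‖Gamma (x + y * I)‖ / Real.Gamma x) (Set.Ioi 0) := by
  have lim {x : ℝ} (hx : 0 < x) : Tendsto (fun n => ∏ j ∈ Finset.range (n + 1),
      (x + j) / ‖((x + j : ℝ) : ℂ) + y * I‖) atTop (𝓝 (‖Gamma (x + y * I)‖ / Real.Gamma x)) := by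
    refine (((continuous_norm.tendsto _).comp (GammaSeq_tendsto_Gamma _)).div
      (Real.GammaSeq_tendsto_Gamma x) (Real.Gamma_pos_of_pos hx).ne').congr' ?_
    filter_upwards [eventually_ne_atTop 0] with n hn
    exact norm_GammaSeq_div_GammaSeq hx y hn
  intro a (ha : 0 < a) b hb hab
  refine le_of_tendsto_of_tendsto' (lim ha) (lim hb) fun n => Finset.prod_le_prod
    (fun j _ => ?_) fun j _ => div_norm_ofReal_add_mul_I_le_of_le y (by positivity) (by linarith)
  have : 0 < a + j := by positivity
  positivity

lemma norm_Gamma_one_half_add_mul_I_sq (y : ℝ) :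
    ‖Gamma (1 / 2 + y * I)‖ ^ 2 = π / Real.cosh (π * y) := by
  set z : ℂ := 1 / 2 + y * I
  have hconj : 1 - z = (starRingEnd ℂ) z := by
    apply Complex.ext <;> norm_num [z]
  have hsin : sin (π * z) = Real.cosh (π * y) := by
    rw [show (π : ℂ) * z = π / 2 + ((π * y : ℝ) : ℂ) * I by push_cast [z]; ring, sin_add,
      sin_pi_div_two, cos_pi_div_two, cos_mul_I, ofReal_cosh]
    ring
  have href := Gamma_mul_Gamma_one_sub z
  rw [hconj, Gamma_conj, mul_conj, hsin, ← ofReal_div] at href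
  rw [Complex.sq_norm, ← ofReal_inj.mp href]

lemma sqrt_pi_mul_exp_le_norm_Gamma_one_half_add_mul_I (y : ℝ) :
    √π * Real.exp (-(π * |y| / 2)) ≤ ‖Gamma (1 / 2 + y * I)‖ := by
  refine le_of_pow_le_pow_left₀ two_ne_zero (norm_nonneg _) ?_
  rw [norm_Gamma_one_half_add_mul_I_sq, mul_pow, Real.sq_sqrt Real.pi_pos.le, ← Real.exp_nat_mul,
    le_div_iff₀ (Real.cosh_pos _)]
  calc π * Real.exp ((2 : ℕ) * -(π * |y| / 2)) * Real.cosh (π * y)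
      ≤ π * Real.exp (-(π * |y|)) * Real.exp (π * |y|) := by
        rw [show ((2 : ℕ) : ℝ) * -(π * |y| / 2) = -(π * |y|) by push_cast; ring]
        gcongr
        simpa [abs_mul, abs_of_pos Real.pi_pos] using Real.cosh_le_exp_abs (π * y)
    _ = π := by rw [mul_assoc, ← Real.exp_add, neg_add_cancel, Real.exp_zero, mul_one]

theorem Gamma_mul_exp_le_norm_Gamma_add_mul_I {x : ℝ} (hx : 1 / 2 ≤ x) (y : ℝ) :
    Real.Gamma x * Real.exp (-(π * |y| / 2)) ≤ ‖Gamma (x + y * I)‖ := by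
  have hmono := monotoneOn_norm_Gamma_div_Gamma y (by norm_num : (0 : ℝ) < 1 / 2)
    (by simp only [Set.mem_Ioi]; linarith) hx
  have hΓx := Real.Gamma_pos_of_pos (by linarith : 0 < x)
  simp only [Real.Gamma_one_half_eq] at hmono
  push_cast at hmono
  rw [div_le_div_iff₀ (Real.sqrt_pos.mpr Real.pi_pos) hΓx] at hmono
  refine le_of_mul_le_mul_left ?_ (Real.sqrt_pos.mpr Real.pi_pos)
  calc √π * (Real.Gamma x * Real.exp (-(π * |y| / 2)))
      = √π * Real.exp (-(π * |y| / 2)) * Real.Gamma x := by ring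
    _ ≤ ‖Gamma (1 / 2 + y * I)‖ * Real.Gamma x := by
        gcongr; exact sqrt_pi_mul_exp_le_norm_Gamma_one_half_add_mul_I y
    _ ≤ ‖Gamma (x + y * I)‖ * √π := hmono
    _ = √π * ‖Gamma (x + y * I)‖ := mul_comm _ _

end Complex

namespace Real

lemma Gamma_add_one_half_le_sqrt_mul_Gamma {s : ℝ} (hs : 0 < s) :
    Gamma (s + 1 / 2) ≤ √s * Gamma s := by
  have hΓ := Gamma_pos_of_pos hs
  have key := Gamma_mul_add_mul_le_rpow_Gamma_mul_rpow_Gamma hs (by linarith : 0 < s + 1)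
    one_half_pos one_half_pos (add_halves 1)
  rw [Gamma_add_one hs.ne', ← mul_rpow hΓ.le (by positivity), ← sqrt_eq_rpow,
    show Gamma s * (s * Gamma s) = s * Gamma s ^ 2 by ring, sqrt_mul hs.le, sqrt_sq hΓ.le] at key
  convert key using 2
  ring

lemma Gamma_two_mul_mul_two_rpow_mul_sqrt_pi_le {s : ℝ} (hs : 0 < s) :
    Gamma (2 * s) * 2 ^ (1 - 2 * s) * √π ≤ √s * Gamma s ^ 2 := by
  rw [← Gamma_mul_Gamma_add_half_of_pos hs]
  calc Gamma s * Gamma (s + 1 / 2) ≤ Gamma s * (√s * Gamma s) :=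
        mul_le_mul_of_nonneg_left (Gamma_add_one_half_le_sqrt_mul_Gamma hs) (Gamma_pos_of_pos hs).le
    _ = √s * Gamma s ^ 2 := by ring

lemma mul_log_add_one_sub_log_le_one {x : ℝ} (hx : 0 < x) : x * (log (x + 1) - log x) ≤ 1 := by
  rw [← log_div (by positivity) hx.ne']
  calc x * log ((x + 1) / x) ≤ x * ((x + 1) / x - 1) := by
        gcongr; exact log_le_sub_one_of_pos (by positivity)
    _ = 1 := by field_simp; ring

lemma exp_le_Gamma_natCast_div_two {n : ℕ} (hn : 2 ≤ n) :
    exp (((n : ℝ) - 1) / 2 * log ((n : ℝ) / 2) - (n : ℝ) / 2) ≤ Gamma ((n : ℝ) / 2) := by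
  obtain ⟨k, rfl⟩ : ∃ k, n = k + 1 := ⟨n - 1, by omega⟩
  have hk : (1 : ℝ) ≤ k := by exact_mod_cast (by omega : 1 ≤ k)
  set s : ℝ := ((k + 1 : ℕ) : ℝ) / 2 with hs_def
  have hs : 0 < s := by positivity
  have hΓ := Gamma_pos_of_pos hs
  have hdup := Gamma_two_mul_mul_two_rpow_mul_sqrt_pi_le hs
  rw [show 2 * s = (k : ℝ) + 1 by push_cast [s]; ring, Gamma_nat_eq_factorial] at hdup
  have hdup_log := log_le_log (by positivity) hdup
  rw [log_mul (by positivity) (by positivity), log_mul (by positivity) (by positivity),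
    log_mul (by positivity) (by positivity), log_rpow two_pos, log_sqrt pi_pos.le,
    log_sqrt hs.le, log_pow] at hdup_log
  have hstirling := Stirling.le_log_factorial_stirling (n := k) (by omega)
  rw [log_mul two_ne_zero pi_ne_zero] at hstirling
  have hlog_s : log s = log (k + 1) - log 2 := by
    rw [hs_def, log_div (by positivity) two_ne_zero]; push_cast; ring
  have hk_log_succ := mul_log_add_one_sub_log_le_one (by positivity : (0 : ℝ) < k)
  have hlog_succ := le_mul_of_one_le_left
    (sub_nonneg.mpr (log_le_log (by positivity) (by linarith : (k : ℝ) ≤ k + 1))) hk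
  rw [← le_log_iff_exp_le hΓ]
  push_cast at hdup_log hs_def ⊢
  rw [hlog_s]
  linarith [log_two_gt_d9, log_nonneg (by linarith [pi_gt_three] : (1 : ℝ) ≤ π)]

lemma exists_pos_mul_exp_le_Gamma_natCast_div_two_add {c : ℝ} (hc : 0 ≤ c) :
    ∃ C > 0, ∀ n : ℕ, 1 ≤ n →
      C * exp (((n : ℝ) - 1) / 2 * log ((n : ℝ) / 2) - (n : ℝ) / 2) ≤ Gamma ((n : ℝ) / 2 + c) := by
  obtain ⟨x₀, hx₀, hmin⟩ := exists_isMinOn_Gamma_Ioi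
  refine ⟨Gamma x₀, Gamma_pos_of_pos (by linarith [hx₀.1]), fun n hn => ?_⟩
  have hn' : (1 : ℝ) ≤ n := by exact_mod_cast hn
  rcases lt_or_ge n 4 with hn4 | hn4
  · have hn3 : (n : ℝ) ≤ 3 := by exact_mod_cast (by omega : n ≤ 3)
    have hlog := log_le_sub_one_of_pos (by positivity : (0 : ℝ) < n / 2)
    have hexp : exp (((n : ℝ) - 1) / 2 * log ((n : ℝ) / 2) - (n : ℝ) / 2) ≤ 1 :=
      exp_le_one_iff.mpr (by nlinarith)
    calc _ ≤ Gamma x₀ * 1 := by gcongr; exact (Gamma_pos_of_pos (by linarith [hx₀.1])).le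
      _ ≤ _ := by rw [mul_one]; exact hmin (by simp only [Set.mem_Ioi]; positivity)
  · have hn4' : (4 : ℝ) ≤ n := by exact_mod_cast hn4
    have hΓx₀ : Gamma x₀ ≤ 1 := Gamma_two ▸ hmin (by norm_num : (2 : ℝ) ∈ Set.Ioi 0)
    calc _ ≤ 1 * Gamma ((n : ℝ) / 2) := by
          gcongr
          exact exp_le_Gamma_natCast_div_two (by omega)
      _ ≤ Gamma ((n : ℝ) / 2 + c) := by
          rw [one_mul]
          exact Gamma_strictMonoOn_Ici.monotoneOn (by simp only [Set.mem_Ici]; linarith)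
            (by simp only [Set.mem_Ici]; linarith) (by linarith)

end Real

/-- Lower bound for the Gamma function on the vertical lines `Re z = n/2 + c`:
for every `c ≥ 0` there is `C > 0` with
`|Γ(n/2 + c + iy)| ≥ C e^{-π|y|/2} exp(((n-1)/2) log(n/2) - n/2)` for all `n ≥ 1`, `y ∈ ℝ`. -/
theorem stmt_8 (c : ℝ) (hc : 0 ≤ c) :
    ∃ C > 0, ∀ n : ℕ, 1 ≤ n → ∀ y : ℝ,
      C * Real.exp (-(Real.pi * |y| / 2)) *
        Real.exp (((n : ℝ) - 1) / 2 * Real.log ((n : ℝ) / 2) - (n : ℝ) / 2)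
      ≤ ‖Complex.Gamma ((((n : ℝ) / 2 + c : ℝ) : ℂ) + y * Complex.I)‖ := by
  obtain ⟨C, hC, hΓ⟩ := Real.exists_pos_mul_exp_le_Gamma_natCast_div_two_add hc
  refine ⟨C, hC, fun n hn y => ?_⟩
  have hn' : (1 : ℝ) ≤ n := by exact_mod_cast hn
  calc _ = C * Real.exp (((n : ℝ) - 1) / 2 * Real.log ((n : ℝ) / 2) - (n : ℝ) / 2)
        * Real.exp (-(π * |y| / 2)) := by ring
    _ ≤ Real.Gamma ((n : ℝ) / 2 + c) * Real.exp (-(π * |y| / 2)) := by gcongr; exact hΓ n hn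
    _ ≤ _ := Complex.Gamma_mul_exp_le_norm_Gamma_add_mul_I (by linarith) y
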